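/- For the string rewrite system R = {ba → ac, cc → bc, b▷ → ac▷, c▷ → bc▷} over {a,b,c,▷}, the set of strings reachable by R from {ac▷, bc▷} equals the language { x b^n c ▷ | x ∈ {a,b}, n ≥ 0 }. -/
import Mathlib


/-- Alphabet {a, b, c, ▷}. -/
inductive Sig4 where
  | a : Sig4
  | b : Sig4
  | c : Sig4
  | rt : Sig4   -- the right end marker ▷
deriving DecidableEq

/-- One rewrite step of a string rewrite system. -/
def Step {Γ : Type*} (R : Set (List Γ × List Γ)) (u v : List Γ) : Prop :=
  ∃ (x y l r : List Γ), (l, r) ∈ R ∧ u = x ++ l ++ y ∧ v = x ++ r ++ y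

open Sig4 in
/-- `R = {ba → ac, cc → bc, b▷ → ac▷, c▷ → bc▷}`. -/
def R4 : Set (List Sig4 × List Sig4) :=
  {([b, a], [a, c]), ([c, c], [b, c]), ([b, rt], [a, c, rt]), ([c, rt], [b, c, rt])}

open Sig4

lemma infix_repl (n : ℕ) (p s : List Sig4) (a1 a2 : Sig4)
    (h : p ++ a1 :: a2 :: s = List.replicate n b ++ [c, rt]) :
    (a1 = b ∧ a2 = b) ∨ (a1 = b ∧ a2 = c) ∨
    (a1 = c ∧ a2 = rt ∧ p = List.replicate n b ∧ s = []) := by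
  induction p generalizing n with
  | nil =>
    cases n with
    | zero => simp_all
    | succ m =>
      simp [List.replicate_succ] at h
      obtain ⟨rfl, h⟩ := h
      cases m with
      | zero => simp_all
      | succ k =>
        simp [List.replicate_succ] at h
        exact Or.inl ⟨rfl, h.1⟩
  | cons q p' ih =>
    cases n with
    | zero =>
      simp at h
      obtain ⟨rfl, h⟩ := h
      have := congrArg List.length h; simp at this; omega
    | succ m =>
      simp [List.replicate_succ] at h
      obtain ⟨rfl, h⟩ := h
      rcases ih m h with h1 | h2 | ⟨h3, h4, h5, h6⟩
      · exact Or.inl h1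
      · exact Or.inr (Or.inl h2)
      · exact Or.inr (Or.inr ⟨h3, h4, by simp [List.replicate_succ, h5], h6⟩)

lemma step_closed (x : Sig4) (n : ℕ) (hx : x = a ∨ x = b) (w : List Sig4)
    (h : Step R4 (x :: (List.replicate n b ++ [c, rt])) w) :
    ∃ x2 m, (x2 = a ∨ x2 = b) ∧ w = x2 :: (List.replicate m b ++ [c, rt]) := by
  obtain ⟨p, y, l, r, hR, hu, hv⟩ := h
  simp only [R4, Set.mem_insert_iff, Set.mem_singleton_iff, Prod.mk.injEq] at hR
  rcases hR with ⟨rfl, rfl⟩ | ⟨rfl, rfl⟩ | ⟨rfl, rfl⟩ | ⟨rfl, rfl⟩ <;>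
  · cases p with
    | nil =>
      simp at hu
      first
      | (obtain ⟨rfl, hu⟩ := hu
         cases n with
         | zero => simp at hu
         | succ m => simp [List.replicate_succ] at hu)
      | (rcases hx with rfl | rfl <;> simp_all)
    | cons q p' =>
      simp at hu
      obtain ⟨rfl, hu⟩ := hu
      rcases infix_repl n p' y _ _ hu.symm with ⟨h1, h2⟩ | ⟨h1, h2⟩ | ⟨h1, h2, h3, h4⟩ <;>
        first
        | exact Sig4.noConfusion h1
        | exact Sig4.noConfusion h2
        | (subst h3; subst h4
           refine ⟨x, n + 1, hx, ?_⟩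
           simp [List.replicate_succ', hv])

lemma reach_n (x : Sig4) (n : ℕ) :
    Relation.ReflTransGen (Step R4) (x :: [c, rt]) (x :: (List.replicate n b ++ [c, rt])) := by
  induction n with
  | zero => simpa using Relation.ReflTransGen.refl
  | succ m ih =>
    refine ih.tail ⟨x :: List.replicate m b, [], [c, rt], [b, c, rt], ?_, by simp, ?_⟩
    · simp [R4]
    · simp [List.replicate_succ']

open Sig4 in
/-- The set of strings reachable by `R` from `{ac▷, bc▷}` equals `{ x b^n c ▷ }`, `x ∈ {a,b}`. -/
theorem reach_R4 :
    { v : List Sig4 | ∃ u, (u = [a, c, rt] ∨ u = [b, c, rt]) ∧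
        Relation.ReflTransGen (Step R4) u v } =
    { v : List Sig4 | ∃ (x : Sig4) (n : ℕ), (x = a ∨ x = b) ∧
        v = x :: (List.replicate n b ++ [c, rt]) } := by
  ext v
  simp only [Set.mem_setOf_eq]
  constructor
  · rintro ⟨u, hu, hsteps⟩
    induction hsteps with
    | refl =>
      rcases hu with rfl | rfl
      · exact ⟨a, 0, Or.inl rfl, by simp⟩
      · exact ⟨b, 0, Or.inr rfl, by simp⟩
    | tail _ hstep ih =>
      obtain ⟨x, m, hx, rfl⟩ := ih
      exact step_closed x m hx _ hstep
  · rintro ⟨x, n, hx, rfl⟩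
    rcases hx with rfl | rfl
    · exact ⟨[a, c, rt], Or.inl rfl, reach_n a n⟩
    · exact ⟨[b, c, rt], Or.inr rfl, reach_n b n⟩
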